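/- Let α₁, α₂, α₃ > 0 satisfy 1/α₁ = 1/α₂ + 1/α₃, define a₁ = −α₁^{−1/2}(α₂α₃)^{1/2}, a₂ = α₂^{−1/2}(α₃α₁)^{1/2}, a₃ = α₃^{−1/2}(α₁α₂)^{1/2}, let λ > 0 satisfy λ² = a₁² − a₂a₃, let M be the 6×6 real matrix with rows (−2a₁, 0, 0, 0, −√α₃, −√α₂), (0, −2a₂, 0, √α₃, 0, √α₁), (0, 0, −2a₃, √α₂, √α₁, 0), (0, √α₃, √α₂, 2a₁, 0, 0), (−√α₃, 0, −√α₁, 0, 2a₂, 0), (−√α₂, −√α₁, 0, 0, 0, 2a₃), and let (b₁,b₂,b₃), (c₁,c₂,c₃), (d₁,d₂,d₃), (e₁,e₂,e₃), (f₁,f₂,f₃) ∈ ℝ³ satisfy M(b₁,b₂,b₃,−b₁,−b₂,−b₃)ᵀ = (√α₁,√α₂,√α₃,√α₁,√α₂,√α₃)ᵀ, M(c₁,c₂,c₃,d₁,d₂,d₃)ᵀ = λ(c₁,c₂,c₃,d₁,d₂,d₃)ᵀ and M(e₁,e₂,e₃,f₁,f₂,f₃)ᵀ = 3λ(e₁,e₂,e₃,f₁,f₂,f₃)ᵀ.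 Then the following identities hold: √α₁c₁ − √α₂c₂ − √α₃c₃ − √α₁d₁ + √α₂d₂ + √α₃d₃ = 0; √α₁e₁ − √α₂e₂ − √α₃e₃ − √α₁f₁ + √α₂f₂ + √α₃f₃ = 0; b₁c₁ − b₂c₂ − b₃c₃ + b₁d₁ − b₂d₂ − b₃d₃ = 0; b₁e₁ − b₂e₂ − b₃e₃ + b₁f₁ − b₂f₂ − b₃f₃ = 0; c₁e₁ − c₂e₂ − c₃e₃ − d₁f₁ + d₂f₂ + d₃f₃ = 0; c₁f₁ − c₂f₂ − c₃f₃ − d₁e₁ + d₂e₂ + d₃e₃ = 0. Furthermore, none of λ, −λ, 3λ, −3λ is equal to a₁, a₂ or a₃. -/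

import Mathlib

/-!
The matrix `M` is self-adjoint for the indefinite form `G = diag(1, -1, -1, -1, 1, 1)`, so
eigenvectors for distinct eigenvalues are `G`-orthogonal, and it anticommutes with the swap of
the two blocks of three coordinates, so swapping the halves of a `3λ`-eigenvector gives a
`-3λ`-eigenvector. The vector `u = (√α₁, √α₂, √α₃, √α₁, √α₂, √α₃)` spans a kernel direction and
`(b, -b)` is a generalized kernel vector above it, which yields the identities involving `u`
and `b`. Finally, multiplying by `σ = α₂ + α₃` and using `α₁ σ = α₂ α₃`, one gets
`a₁² σ = σ²`, `a₂² σ = α₃²`, `a₃² σ = α₂²` and `λ² σ = α₂² + α₂ α₃ + α₃²`, so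
`a₂², a₃² < λ² < a₁² < 9λ²`.
-/

noncomputable section

/-- The 6×6 matrix M of Proposition 11.2. -/
def M6 (α₁ α₂ α₃ a₁ a₂ a₃ : ℝ) : Matrix (Fin 6) (Fin 6) ℝ :=
  !![-(2*a₁), 0, 0, 0, -Real.sqrt α₃, -Real.sqrt α₂;
     0, -(2*a₂), 0, Real.sqrt α₃, 0, Real.sqrt α₁;
     0, 0, -(2*a₃), Real.sqrt α₂, Real.sqrt α₁, 0;
     0, Real.sqrt α₃, Real.sqrt α₂, 2*a₁, 0, 0;
     -Real.sqrt α₃, 0, -Real.sqrt α₁, 0, 2*a₂, 0;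
     -Real.sqrt α₂, -Real.sqrt α₁, 0, 0, 0, 2*a₃]

open Matrix

section SelfAdjoint

variable {n R : Type*} [Fintype n] [CommRing R] {J A : Matrix n n R}

theorem Matrix.IsSelfAdjoint.mulVec_dotProduct_mulVec (hA : Matrix.IsSelfAdjoint J A)
    (x y : n → R) : A *ᵥ x ⬝ᵥ J *ᵥ y = x ⬝ᵥ J *ᵥ (A *ᵥ y) := by
  rw [dotProduct_mulVec, ← vecMul_transpose, vecMul_vecMul, hA, ← dotProduct_mulVec,
    ← mulVec_mulVec]

theorem Matrix.IsSelfAdjoint.mulVec_dotProduct_of_mulVec_eq_smul (hA : Matrix.IsSelfAdjoint J A)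
    (x : n → R) {y : n → R} {ν : R} (hy : A *ᵥ y = ν • y) :
    A *ᵥ x ⬝ᵥ J *ᵥ y = ν * (x ⬝ᵥ J *ᵥ y) := by
  rw [hA.mulVec_dotProduct_mulVec, hy, mulVec_smul, dotProduct_smul, smul_eq_mul]

variable [IsDomain R]

theorem Matrix.IsSelfAdjoint.dotProduct_eq_zero_of_eigen (hA : Matrix.IsSelfAdjoint J A)
    {x y : n → R} {μ ν : R} (hx : A *ᵥ x = μ • x) (hy : A *ᵥ y = ν • y) (hμν : μ ≠ ν) :
    x ⬝ᵥ J *ᵥ y = 0 := by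
  have h := hA.mulVec_dotProduct_of_mulVec_eq_smul x hy
  rw [hx, smul_dotProduct, smul_eq_mul, ← sub_eq_zero, ← sub_mul] at h
  exact (mul_eq_zero.mp h).resolve_left (sub_ne_zero.mpr hμν)

theorem Matrix.IsSelfAdjoint.dotProduct_eq_zero_of_mulVec_eq (hA : Matrix.IsSelfAdjoint J A)
    {x y z : n → R} {ν : R} (hx : A *ᵥ x = z) (hz : z ⬝ᵥ J *ᵥ y = 0) (hy : A *ᵥ y = ν • y)
    (hν : ν ≠ 0) : x ⬝ᵥ J *ᵥ y = 0 := by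
  have h := hA.mulVec_dotProduct_of_mulVec_eq_smul x hy
  rw [hx, hz, eq_comm] at h
  exact (mul_eq_zero.mp h).resolve_left hν

end SelfAdjoint

def M6Symmetrizer : Matrix (Fin 6) (Fin 6) ℝ :=
  diagonal ![1, -1, -1, -1, 1, 1]

theorem dotProduct_M6Symmetrizer_mulVec (x y : Fin 6 → ℝ) :
    x ⬝ᵥ M6Symmetrizer *ᵥ y =
      x 0 * y 0 - x 1 * y 1 - x 2 * y 2 - x 3 * y 3 + x 4 * y 4 + x 5 * y 5 := by
  simp only [M6Symmetrizer, mulVec_diagonal, dotProduct, Fin.sum_univ_six, cons_val]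
  ring

section M6

variable (α₁ α₂ α₃ a₁ a₂ a₃ : ℝ)

theorem M6_isSelfAdjoint : Matrix.IsSelfAdjoint M6Symmetrizer (M6 α₁ α₂ α₃ a₁ a₂ a₃) := by
  ext i j
  fin_cases i <;> fin_cases j <;> simp [M6Symmetrizer, M6, mul_diagonal, diagonal_mul]

theorem M6_mulVec_comp_add_three (v : Fin 6 → ℝ) :
    M6 α₁ α₂ α₃ a₁ a₂ a₃ *ᵥ (v ∘ (· + 3)) = -((M6 α₁ α₂ α₃ a₁ a₂ a₃ *ᵥ v) ∘ (· + 3)) := by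
  funext i
  fin_cases i <;> simp [M6, mulVec, dotProduct, Fin.sum_univ_six] <;> ring

variable {α₁ α₂ α₃ a₁ a₂ a₃}

theorem M6_mulVec_swap_eq_neg_smul {x y : Fin 3 → ℝ} {μ : ℝ}
    (h : M6 α₁ α₂ α₃ a₁ a₂ a₃ *ᵥ ![x 0, x 1, x 2, y 0, y 1, y 2]
      = μ • ![x 0, x 1, x 2, y 0, y 1, y 2]) :
    M6 α₁ α₂ α₃ a₁ a₂ a₃ *ᵥ ![y 0, y 1, y 2, x 0, x 1, x 2]
      = (-μ) • ![y 0, y 1, y 2, x 0, x 1, x 2] := by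
  have hswap : ![y 0, y 1, y 2, x 0, x 1, x 2] = ![x 0, x 1, x 2, y 0, y 1, y 2] ∘ (· + 3) := by
    funext i
    fin_cases i <;> rfl
  rw [hswap, M6_mulVec_comp_add_three, h, Pi.smul_comp, neg_smul]

theorem M6_mulVec_sqrt_eq_zero (r₁ : √α₁ * a₁ = -(√α₂ * √α₃)) (r₂ : √α₂ * a₂ = √α₃ * √α₁)
    (r₃ : √α₃ * a₃ = √α₁ * √α₂) :
    M6 α₁ α₂ α₃ a₁ a₂ a₃ *ᵥ ![√α₁, √α₂, √α₃, √α₁, √α₂, √α₃] = 0 := by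
  funext i
  fin_cases i <;> simp [M6, mulVec, dotProduct, Fin.sum_univ_six] <;> linarith

end M6

theorem sqrt_mul_div_sqrt {x y z : ℝ} (hx : 0 ≤ x) (hz : 0 < z) :
    √z * (√(x * y) / √z) = √x * √y := by
  rw [mul_div_cancel₀ _ (Real.sqrt_pos.mpr hz).ne', Real.sqrt_mul hx]

theorem sq_sqrt_mul_div_sqrt {x y z : ℝ} (hx : 0 ≤ x) (hy : 0 ≤ y) (hz : 0 < z) :
    (√(x * y) / √z) ^ 2 * z = x * y := by
  rw [div_pow, Real.sq_sqrt (mul_nonneg hx hy), Real.sq_sqrt hz.le, div_mul_cancel₀ _ hz.ne']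

theorem ne_of_sq_ne_of_sq_ne {x lam : ℝ} (h₁ : x ^ 2 ≠ lam ^ 2) (h₃ : x ^ 2 ≠ (3 * lam) ^ 2) :
    ∀ μ ∈ ({lam, -lam, 3 * lam, -(3 * lam)} : Set ℝ), μ ≠ x := by
  rintro μ (rfl | rfl | rfl | rfl) rfl <;> simp_all

theorem M6_param_sq_bounds {α₁ α₂ α₃ a₁ a₂ a₃ lam : ℝ} (hα₁ : 0 < α₁) (hα₂ : 0 < α₂)
    (hα₃ : 0 < α₃) (hsum : 1 / α₁ = 1 / α₂ + 1 / α₃)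
    (ha₁ : a₁ = -(√(α₂ * α₃) / √α₁)) (ha₂ : a₂ = √(α₃ * α₁) / √α₂)
    (ha₃ : a₃ = √(α₁ * α₂) / √α₃) (hlam2 : lam ^ 2 = a₁ ^ 2 - a₂ * a₃) :
    a₂ ^ 2 < lam ^ 2 ∧ a₃ ^ 2 < lam ^ 2 ∧ lam ^ 2 < a₁ ^ 2 ∧ a₁ ^ 2 < (3 * lam) ^ 2 := by
  have hα : α₁ * (α₂ + α₃) = α₂ * α₃ := by
    field_simp at hsum
    linarith
  have sq₁ : a₁ ^ 2 * α₁ = α₂ * α₃ := by rw [ha₁, neg_sq, sq_sqrt_mul_div_sqrt hα₂.le hα₃.le hα₁]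
  have sq₂ : a₂ ^ 2 * α₂ = α₃ * α₁ := by rw [ha₂, sq_sqrt_mul_div_sqrt hα₃.le hα₁.le hα₂]
  have sq₃ : a₃ ^ 2 * α₃ = α₁ * α₂ := by rw [ha₃, sq_sqrt_mul_div_sqrt hα₁.le hα₂.le hα₃]
  have h₂₃ : a₂ * a₃ = α₁ := by
    rw [ha₂, ha₃, Real.sqrt_mul hα₃.le, Real.sqrt_mul hα₁.le]
    field_simp
    rw [Real.sq_sqrt hα₁.le]
  have hσ : 0 < α₂ + α₃ := by positivity
  have l₁ : a₁ ^ 2 = α₂ + α₃ :=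
    mul_left_cancel₀ hα₁.ne' (by linear_combination sq₁ - hα)
  have l₂ : a₂ ^ 2 * (α₂ + α₃) = α₃ ^ 2 :=
    mul_left_cancel₀ hα₂.ne' (by linear_combination (α₂ + α₃) * sq₂ + α₃ * hα)
  have l₃ : a₃ ^ 2 * (α₂ + α₃) = α₂ ^ 2 :=
    mul_left_cancel₀ hα₃.ne' (by linear_combination (α₂ + α₃) * sq₃ + α₂ * hα)
  have hlam : lam ^ 2 * (α₂ + α₃) = α₂ ^ 2 + α₂ * α₃ + α₃ ^ 2 := by
    linear_combination (α₂ + α₃) * hlam2 + (α₂ + α₃) * l₁ - (α₂ + α₃) * h₂₃ - hα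
  refine ⟨lt_of_mul_lt_mul_right ?_ hσ.le, lt_of_mul_lt_mul_right ?_ hσ.le,
    lt_of_mul_lt_mul_right ?_ hσ.le, lt_of_mul_lt_mul_right ?_ hσ.le⟩
  · rw [l₂, hlam]; nlinarith
  · rw [l₃, hlam]; nlinarith
  · rw [l₁, hlam]; nlinarith
  · rw [mul_pow, mul_assoc, hlam, l₁]; nlinarith

theorem statement_16
    (α₁ α₂ α₃ : ℝ) (hα₁ : 0 < α₁) (hα₂ : 0 < α₂) (hα₃ : 0 < α₃)
    (hsum : 1/α₁ = 1/α₂ + 1/α₃)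
    (a₁ a₂ a₃ : ℝ)
    (ha₁ : a₁ = -(Real.sqrt (α₂ * α₃) / Real.sqrt α₁))
    (ha₂ : a₂ = Real.sqrt (α₃ * α₁) / Real.sqrt α₂)
    (ha₃ : a₃ = Real.sqrt (α₁ * α₂) / Real.sqrt α₃)
    (lam : ℝ) (hlam : 0 < lam) (hlam2 : lam^2 = a₁^2 - a₂*a₃)
    (b c d e f : Fin 3 → ℝ)
    (hb : (M6 α₁ α₂ α₃ a₁ a₂ a₃).mulVec
        ![b 0, b 1, b 2, -(b 0), -(b 1), -(b 2)]
        = ![Real.sqrt α₁, Real.sqrt α₂, Real.sqrt α₃,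
            Real.sqrt α₁, Real.sqrt α₂, Real.sqrt α₃])
    (hcd : (M6 α₁ α₂ α₃ a₁ a₂ a₃).mulVec ![c 0, c 1, c 2, d 0, d 1, d 2]
        = lam • ![c 0, c 1, c 2, d 0, d 1, d 2])
    (hef : (M6 α₁ α₂ α₃ a₁ a₂ a₃).mulVec ![e 0, e 1, e 2, f 0, f 1, f 2]
        = (3 * lam) • ![e 0, e 1, e 2, f 0, f 1, f 2]) :
    (Real.sqrt α₁ * c 0 - Real.sqrt α₂ * c 1 - Real.sqrt α₃ * c 2
      - Real.sqrt α₁ * d 0 + Real.sqrt α₂ * d 1 + Real.sqrt α₃ * d 2 = 0) ∧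
    (Real.sqrt α₁ * e 0 - Real.sqrt α₂ * e 1 - Real.sqrt α₃ * e 2
      - Real.sqrt α₁ * f 0 + Real.sqrt α₂ * f 1 + Real.sqrt α₃ * f 2 = 0) ∧
    (b 0 * c 0 - b 1 * c 1 - b 2 * c 2 + b 0 * d 0 - b 1 * d 1 - b 2 * d 2 = 0) ∧
    (b 0 * e 0 - b 1 * e 1 - b 2 * e 2 + b 0 * f 0 - b 1 * f 1 - b 2 * f 2 = 0) ∧
    (c 0 * e 0 - c 1 * e 1 - c 2 * e 2 - d 0 * f 0 + d 1 * f 1 + d 2 * f 2 = 0) ∧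
    (c 0 * f 0 - c 1 * f 1 - c 2 * f 2 - d 0 * e 0 + d 1 * e 1 + d 2 * e 2 = 0) ∧
    (∀ μ ∈ ({lam, -lam, 3 * lam, -(3 * lam)} : Set ℝ),
      μ ≠ a₁ ∧ μ ≠ a₂ ∧ μ ≠ a₃) := by
  have r₁ : √α₁ * a₁ = -(√α₂ * √α₃) := by rw [ha₁, mul_neg, sqrt_mul_div_sqrt hα₂.le hα₁]
  have r₂ : √α₂ * a₂ = √α₃ * √α₁ := by rw [ha₂, sqrt_mul_div_sqrt hα₃.le hα₂]
  have r₃ : √α₃ * a₃ = √α₁ * √α₂ := by rw [ha₃, sqrt_mul_div_sqrt hα₁.le hα₃]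
  have hM := M6_isSelfAdjoint α₁ α₂ α₃ a₁ a₂ a₃
  have hu := M6_mulVec_sqrt_eq_zero r₁ r₂ r₃
  have hfe := M6_mulVec_swap_eq_neg_smul hef
  have k₁ := hM.dotProduct_eq_zero_of_mulVec_eq hu (zero_dotProduct _) hcd hlam.ne'
  have k₂ := hM.dotProduct_eq_zero_of_mulVec_eq hu (zero_dotProduct _) hef (by positivity)
  have k₃ := hM.dotProduct_eq_zero_of_mulVec_eq hb k₁ hcd hlam.ne'
  have k₄ := hM.dotProduct_eq_zero_of_mulVec_eq hb k₂ hef (by positivity)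
  have k₅ := hM.dotProduct_eq_zero_of_eigen hcd hef (by linarith)
  have k₆ := hM.dotProduct_eq_zero_of_eigen hfe hcd (by linarith)
  simp only [dotProduct_M6Symmetrizer_mulVec, cons_val] at k₁ k₂ k₃ k₄ k₅ k₆
  obtain ⟨l₂, l₃, l₁, l₁'⟩ :=
    M6_param_sq_bounds hα₁ hα₂ hα₃ hsum ha₁ ha₂ ha₃ hlam2
  have l : lam ^ 2 < (3 * lam) ^ 2 := by nlinarith
  refine ⟨k₁, k₂, by linarith, by linarith, k₅, by linarith, fun μ hμ => ⟨?_, ?_, ?_⟩⟩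
  · exact ne_of_sq_ne_of_sq_ne l₁.ne' l₁'.ne μ hμ
  · exact ne_of_sq_ne_of_sq_ne l₂.ne (l₂.trans l).ne μ hμ
  · exact ne_of_sq_ne_of_sq_ne l₃.ne (l₃.trans l).ne μ hμ
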